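/- Let p ∈ [2, ∞) and let 𝒢 = (V, ω) be a finite weighted graph with all degrees positive. Then ‖A_𝒢‖_{B(L^p_0(V,ν;ℂ))} ≤ 2^{1−2/p} · ‖A_𝒢‖_{B(L²_0(V,ν;ℂ))}^{2/p}. -/

import Mathlib

/-!
Riesz–Thorin for `T = A - P`, with `P f` the `ν`-mean of `f`: on mean-zero functions `T = A`;
`‖T‖_{∞→∞} ≤ 2`, and `‖T‖_{2→2} ≤ ‖A‖_{B(L²₀)}` because `T f = A (f - P f)` and
`‖f - P f‖₂ ≤ ‖f‖₂`. The interpolation is Stein's: for `f ∈ Lᵖ`, `g ∈ L^q` (`1/p + 1/q = 1`) the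
pairing `F z = ⟨g_z, T f_z⟩`, with `f_z = |f|^{pz/2} sgn f` and `g_z = |g|^{q(1-z/2)} sgn g`, is
entire and bounded on the strip `0 ≤ Re z ≤ 1`; it is bounded by `2 ‖g‖_q^q` on `Re z = 0` (where
`|f_z| ≤ 1`) and by `‖A‖_{B(L²₀)} ‖g‖_q^{q/2} ‖f‖_p^{p/2}` on `Re z = 1` (where `f_z, g_z ∈ L²`), so
Hadamard's three lines theorem at `z = 2/p`, where `f_z = f` and `g_z = g`, bounds `|⟨g, T f⟩|`.
Choosing `g = |Tf|^{p-2} conj (Tf)` turns this into the `Lᵖ` bound.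
-/

open scoped BigOperators
open Finset MeasureTheory

noncomputable section

variable {V : Type*}

def wdeg [Fintype V] (ω : V → V → ℝ) (s : V) : ℝ := ∑ t, ω s t

def nu [Fintype V] (ω : V → V → ℝ) (s : V) : ℝ := wdeg ω s / ∑ t, wdeg ω t

def edgeP [Fintype V] (ω : V → V → ℝ) (s t : V) : ℝ := ω s t / ∑ u, ∑ v, ω u v

def SymmW (ω : V → V → ℝ) : Prop := ∀ s t, ω s t = ω t s

def NonnegW (ω : V → V → ℝ) : Prop := ∀ s t, 0 ≤ ω s t

def ConnW (ω : V → V → ℝ) : Prop := (SimpleGraph.fromRel fun s t => 0 < ω s t).Connected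

def lpNormW [Fintype V] (ω : V → V → ℝ) (p : ℝ) {X : Type*} [NormedAddCommGroup X]
    (f : V → X) : ℝ := (∑ s, nu ω s * ‖f s‖ ^ p) ^ (1 / p)

def gradNormW [Fintype V] (ω : V → V → ℝ) (p : ℝ) {X : Type*} [NormedAddCommGroup X]
    (f : V → X) : ℝ := (∑ s, ∑ t, edgeP ω s t * ‖f t - f s‖ ^ p) ^ (1 / p)

def poincareConst [Fintype V] (ω : V → V → ℝ) (p : ℝ) (X : Type*) [NormedAddCommGroup X] : ℝ :=
  sInf {π : ℝ | 0 ≤ π ∧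
    ∀ f : V → X, (⨅ x : X, lpNormW ω p fun s => f s - x) ≤ π * gradNormW ω p f}

def markovW [Fintype V] (ω : V → V → ℝ) {X : Type*} [AddCommGroup X] [Module ℝ X]
    (f : V → X) (s : V) : X := (wdeg ω s)⁻¹ • ∑ t, ω s t • f t

/-- Operator norm of the Markov operator restricted to mean-zero functions in `L^p(V,ν;ℂ)`. -/
def opNorm0 {V : Type*} [Fintype V] (ω : V → V → ℝ) (p : ℝ) : ℝ :=
  sInf {K : ℝ | 0 ≤ K ∧ ∀ f : V → ℂ, (∑ s, (nu ω s : ℂ) * f s) = 0 →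
    lpNormW ω p (markovW ω f) ≤ K * lpNormW ω p f}

namespace Complex

-- The phase `x / ‖x‖` is `0` at `x = 0`, so `cpowPhase 0 w = 0` even for `w = 0`.
def cpowPhase (x w : ℂ) : ℂ := (‖x‖ : ℂ) ^ w * (x / ‖x‖)

@[simp] lemma cpowPhase_zero_left (w : ℂ) : cpowPhase 0 w = 0 := by simp [cpowPhase]

@[simp] lemma cpowPhase_one (x : ℂ) : cpowPhase x 1 = x := by
  rcases eq_or_ne x 0 with rfl | hx
  · simp
  · rw [cpowPhase, cpow_one, mul_div_cancel₀ _ (ofReal_ne_zero.2 (norm_ne_zero_iff.2 hx))]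

lemma norm_cpowPhase {x : ℂ} (hx : x ≠ 0) (w : ℂ) : ‖cpowPhase x w‖ = ‖x‖ ^ w.re := by
  rw [cpowPhase, norm_mul, norm_cpow_eq_rpow_re_of_pos (norm_pos_iff.2 hx), norm_div,
    norm_real, Real.norm_of_nonneg (norm_nonneg x), div_self (norm_ne_zero_iff.2 hx), mul_one]

lemma norm_cpowPhase_le (x w : ℂ) : ‖cpowPhase x w‖ ≤ ‖x‖ ^ w.re := by
  rcases eq_or_ne x 0 with rfl | hx
  · simpa using Real.rpow_nonneg le_rfl _
  · exact (norm_cpowPhase hx w).le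

lemma norm_cpowPhase_le_exp (x : ℂ) {w : ℂ} {c : ℝ} (hw : |w.re| ≤ c) :
    ‖cpowPhase x w‖ ≤ Real.exp (|Real.log ‖x‖| * c) := by
  rcases eq_or_ne x 0 with rfl | hx
  · simp
  rw [norm_cpowPhase hx, Real.rpow_def_of_pos (norm_pos_iff.2 hx), Real.exp_le_exp]
  calc Real.log ‖x‖ * w.re ≤ |Real.log ‖x‖| * |w.re| := by rw [← abs_mul]; exact le_abs_self _
    _ ≤ |Real.log ‖x‖| * c := mul_le_mul_of_nonneg_left hw (abs_nonneg _)

lemma sq_norm_cpowPhase_le (x w : ℂ) : ‖cpowPhase x w‖ ^ 2 ≤ ‖x‖ ^ (2 * w.re) := by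
  rw [mul_comm, Real.rpow_mul (norm_nonneg x), Real.rpow_two]
  exact pow_le_pow_left₀ (norm_nonneg _) (norm_cpowPhase_le x w) 2

@[fun_prop]
lemma differentiable_cpowPhase (x : ℂ) : Differentiable ℂ (cpowPhase x) := by
  rcases eq_or_ne x 0 with rfl | hx
  · rw [show cpowPhase 0 = fun _ => 0 from funext cpowPhase_zero_left]
    exact differentiable_const _
  · exact ((differentiable_id (𝕜 := ℂ)).const_cpow
      (Or.inl (ofReal_ne_zero.2 (norm_ne_zero_iff.2 hx)))).mul_const _

end Complex

section Interpolation

open Complex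

variable [Fintype V] {μ : V → ℝ}

lemma norm_sum_ofReal_mul_le (hμ : ∀ s, 0 ≤ μ s) (u : V → ℂ) :
    ‖∑ s, (μ s : ℂ) * u s‖ ≤ ∑ s, μ s * ‖u s‖ := by
  refine (norm_sum_le _ _).trans (le_of_eq (sum_congr rfl fun s _ => ?_))
  rw [norm_mul, norm_real, Real.norm_of_nonneg (hμ s)]

lemma sum_mul_norm_rpow_nonneg (hμ : ∀ s, 0 ≤ μ s) (u : V → ℂ) (r : ℝ) :
    0 ≤ ∑ s, μ s * ‖u s‖ ^ r :=
  sum_nonneg fun s _ => mul_nonneg (hμ s) (by positivity)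

lemma sum_mul_norm_mul_le_sqrt (hμ : ∀ s, 0 ≤ μ s) (g h : V → ℂ) :
    ∑ s, μ s * ‖g s * h s‖ ≤
      √(∑ s, μ s * ‖g s‖ ^ 2) * √(∑ s, μ s * ‖h s‖ ^ 2) := by
  have hsplit : ∀ s, μ s * ‖g s * h s‖ = (√(μ s) * ‖g s‖) * (√(μ s) * ‖h s‖) := fun s => by
    rw [norm_mul, mul_mul_mul_comm, Real.mul_self_sqrt (hμ s)]
  simp_rw [hsplit]
  refine (Real.sum_mul_le_sqrt_mul_sqrt _ _ _).trans (le_of_eq ?_)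
  simp_rw [mul_pow, Real.sq_sqrt (hμ _)]

variable (μ) in
def interpPairing (T : (V → ℂ) →ₗ[ℂ] V → ℂ) (p q : ℝ) (f g : V → ℂ) (z : ℂ) : ℂ :=
  ∑ s, (μ s : ℂ) *
    (cpowPhase (g s) (q * (1 - z / 2)) * T (fun t => cpowPhase (f t) (p / 2 * z)) s)

variable (T : (V → ℂ) →ₗ[ℂ] V → ℂ) {p q : ℝ}

lemma interpPairing_two_div (hpq : p.HolderConjugate q) (f g : V → ℂ) :
    interpPairing μ T p q f g (2 / p : ℝ) = ∑ s, (μ s : ℂ) * (g s * T f s) := by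
  have hf : (p : ℂ) / 2 * (2 / p : ℝ) = 1 := by
    have hp : (p : ℂ) ≠ 0 := ofReal_ne_zero.2 hpq.ne_zero
    push_cast
    field_simp
  have hg : (q : ℂ) * (1 - (2 / p : ℝ) / 2) = 1 := by
    have hq : q * (1 - 2 / p / 2) = 1 := by
      rw [show 2 / p / 2 = p⁻¹ by ring, hpq.one_sub_inv, mul_inv_cancel₀ hpq.symm.ne_zero]
    exact_mod_cast hq
  simp only [interpPairing, hf, hg, cpowPhase_one]

lemma differentiable_interpPairing (f g : V → ℂ) :
    Differentiable ℂ (interpPairing μ T p q f g) := by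
  have hT : Differentiable ℂ fun z => T (fun t => cpowPhase (f t) (p / 2 * z)) :=
    (LinearMap.toContinuousLinearMap T).differentiable.comp
      (differentiable_pi.2 fun t =>
        (differentiable_cpowPhase _).comp (differentiable_id.const_mul _))
  refine Differentiable.fun_sum fun s _ => (differentiable_const _).mul
    (((differentiable_cpowPhase _).comp ?_).mul (differentiable_pi.1 hT s))
  fun_prop

lemma norm_interpPairing_le_of_re_eq_zero (hμ : ∀ s, 0 ≤ μ s) {M : ℝ}
    (hM : ∀ f : V → ℂ, (∀ t, ‖f t‖ ≤ 1) → ∀ s, ‖T f s‖ ≤ M) (f g : V → ℂ) {z : ℂ}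
    (hz : z.re = 0) :
    ‖interpPairing μ T p q f g z‖ ≤ (∑ s, μ s * ‖g s‖ ^ q) * M := by
  have hfz : ∀ t, ‖cpowPhase (f t) (p / 2 * z)‖ ≤ 1 := fun t =>
    (norm_cpowPhase_le _ _).trans (by simp [hz])
  rw [sum_mul]
  refine (norm_sum_ofReal_mul_le hμ _).trans (sum_le_sum fun s _ => ?_)
  rw [mul_assoc, norm_mul]
  have hgz : ‖cpowPhase (g s) (q * (1 - z / 2))‖ ≤ ‖g s‖ ^ q :=
    (norm_cpowPhase_le _ _).trans (by simp [hz])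
  exact mul_le_mul_of_nonneg_left
    (mul_le_mul hgz (hM _ hfz s) (norm_nonneg _) (by positivity)) (hμ s)

lemma norm_interpPairing_le_of_re_eq_one (hμ : ∀ s, 0 ≤ μ s) {K : ℝ} (hK0 : 0 ≤ K)
    (hK : ∀ f : V → ℂ, √(∑ s, μ s * ‖T f s‖ ^ 2) ≤ K * √(∑ s, μ s * ‖f s‖ ^ 2))
    (f g : V → ℂ) {z : ℂ} (hz : z.re = 1) :
    ‖interpPairing μ T p q f g z‖ ≤
      √(∑ s, μ s * ‖g s‖ ^ q) * (K * √(∑ s, μ s * ‖f s‖ ^ p)) := by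
  have hfz : ∑ t, μ t * ‖cpowPhase (f t) (p / 2 * z)‖ ^ 2 ≤ ∑ t, μ t * ‖f t‖ ^ p :=
    sum_le_sum fun t _ => mul_le_mul_of_nonneg_left
      ((sq_norm_cpowPhase_le _ _).trans_eq (by simp [hz]; ring_nf)) (hμ t)
  have hgz : ∑ s, μ s * ‖cpowPhase (g s) (q * (1 - z / 2))‖ ^ 2 ≤ ∑ s, μ s * ‖g s‖ ^ q :=
    sum_le_sum fun s _ => mul_le_mul_of_nonneg_left
      ((sq_norm_cpowPhase_le _ _).trans_eq (by simp [hz]; ring_nf)) (hμ s)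
  refine (norm_sum_ofReal_mul_le hμ _).trans ((sum_mul_norm_mul_le_sqrt hμ _ _).trans ?_)
  exact mul_le_mul (Real.sqrt_le_sqrt hgz)
    ((hK _).trans (mul_le_mul_of_nonneg_left (Real.sqrt_le_sqrt hfz) hK0))
    (Real.sqrt_nonneg _) (Real.sqrt_nonneg _)

open HadamardThreeLines in
lemma bddAbove_norm_interpPairing (hμ : ∀ s, 0 ≤ μ s) (f g : V → ℂ) :
    BddAbove ((norm ∘ interpPairing μ T p q f g) '' verticalClosedStrip 0 1) := by
  set T' := LinearMap.toContinuousLinearMap T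
  set R := ∑ t, Real.exp (|Real.log ‖f t‖| * |p|)
  refine ⟨∑ s, μ s * (Real.exp (|Real.log ‖g s‖| * |q|) * (‖T'‖ * R)), ?_⟩
  rintro _ ⟨z, ⟨hz0, hz1⟩, rfl⟩
  have hfz : ‖fun t => cpowPhase (f t) (p / 2 * z)‖ ≤ R := by
    refine (pi_norm_le_iff_of_nonneg (by positivity)).2 fun t => ?_
    refine (norm_cpowPhase_le_exp _ ?_).trans
      (single_le_sum (f := fun t => Real.exp (|Real.log ‖f t‖| * |p|))
        (fun _ _ => by positivity) (mem_univ t))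
    simp only [mul_re, div_ofNat_re, ofReal_re, div_ofNat_im, ofReal_im, zero_div, zero_mul,
      sub_zero, abs_mul, abs_div, abs_two, abs_of_nonneg hz0]
    nlinarith [abs_nonneg p]
  have hgz : ∀ s, ‖cpowPhase (g s) (q * (1 - z / 2))‖ ≤ Real.exp (|Real.log ‖g s‖| * |q|) := by
    intro s
    refine norm_cpowPhase_le_exp _ ?_
    simp only [mul_re, ofReal_re, sub_re, one_re, div_ofNat_re, ofReal_im, sub_im, one_im,
      div_ofNat_im, zero_mul, sub_zero, abs_mul]
    exact mul_le_of_le_one_right (abs_nonneg q) (abs_le.2 ⟨by linarith, by linarith⟩)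
  refine (norm_sum_ofReal_mul_le hμ _).trans (sum_le_sum fun s _ => ?_)
  rw [norm_mul]
  exact mul_le_mul_of_nonneg_left (mul_le_mul (hgz s)
    ((norm_le_pi_norm _ s).trans (T'.le_opNorm_of_le hfz)) (norm_nonneg _) (by positivity)) (hμ s)

lemma rpow_interp_eq {G Φ M K p q : ℝ} (hG : 0 ≤ G) (hΦ : 0 ≤ Φ) (hM : 0 ≤ M) (hK : 0 ≤ K)
    (hpq : p.HolderConjugate q) :
    (G * M) ^ (1 - 2 / p) * (√G * (K * √Φ)) ^ (2 / p) =
      M ^ (1 - 2 / p) * K ^ (2 / p) * (G ^ (1 / q) * Φ ^ (1 / p)) := by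
  have hsqrt : ∀ {x : ℝ}, 0 ≤ x → √x ^ (2 / p) = x ^ (1 / p) := fun hx => by
    rw [Real.sqrt_eq_rpow, ← Real.rpow_mul hx]
    ring_nf
  have hGq : G ^ (1 - 2 / p) * G ^ (1 / p) = G ^ (1 / q) := by
    have he : 1 - 2 / p + 1 / p = 1 / q := by rw [one_div q, ← hpq.one_sub_inv]; ring
    rw [← Real.rpow_add' hG (by rw [he]; exact hpq.symm.one_div_ne_zero), he]
  rw [Real.mul_rpow hG hM, Real.mul_rpow (Real.sqrt_nonneg _) (by positivity),
    Real.mul_rpow hK (Real.sqrt_nonneg _), hsqrt hG, hsqrt hΦ, ← hGq]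
  ring

open HadamardThreeLines in
theorem norm_sum_mul_le_of_interpolation (hμ : ∀ s, 0 ≤ μ s) {M K : ℝ} (hM0 : 0 ≤ M)
    (hK0 : 0 ≤ K) (hM : ∀ f : V → ℂ, (∀ t, ‖f t‖ ≤ 1) → ∀ s, ‖T f s‖ ≤ M)
    (hK : ∀ f : V → ℂ, √(∑ s, μ s * ‖T f s‖ ^ 2) ≤ K * √(∑ s, μ s * ‖f s‖ ^ 2))
    (hp : 2 ≤ p) (hpq : p.HolderConjugate q) (f g : V → ℂ) :
    ‖∑ s, (μ s : ℂ) * (g s * T f s)‖ ≤ M ^ (1 - 2 / p) * K ^ (2 / p) *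
      ((∑ s, μ s * ‖g s‖ ^ q) ^ (1 / q) * (∑ s, μ s * ‖f s‖ ^ p) ^ (1 / p)) := by
  have hθ : ((2 / p : ℝ) : ℂ) ∈ verticalClosedStrip 0 1 := by
    have := hpq.pos
    show (2 / p : ℝ) ∈ Set.Icc 0 1
    exact ⟨by positivity, (div_le_one this).2 hp⟩
  have h3 := norm_le_interp_of_mem_verticalClosedStrip₀₁' (interpPairing μ T p q f g) hθ
    (differentiable_interpPairing T f g).diffContOnCl (bddAbove_norm_interpPairing T hμ f g)
    (fun z hz => norm_interpPairing_le_of_re_eq_zero T hμ hM f g hz)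
    (fun z hz => norm_interpPairing_le_of_re_eq_one T hμ hK0 hK f g hz)
  rw [interpPairing_two_div T hpq, ofReal_re] at h3
  exact h3.trans_eq (rpow_interp_eq (sum_mul_norm_rpow_nonneg hμ _ _)
    (sum_mul_norm_rpow_nonneg hμ _ _) hM0 hK0 hpq)

lemma rpow_inv_le_of_le_mul_rpow {N A p q : ℝ} (hN : 0 ≤ N) (hA : 0 ≤ A)
    (hpq : p.HolderConjugate q) (h : N ≤ A * N ^ (1 / q)) : N ^ (1 / p) ≤ A := by
  rcases hN.eq_or_lt with rfl | hN
  · rwa [Real.zero_rpow hpq.one_div_ne_zero]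
  have hsplit : N = N ^ (1 / p) * N ^ (1 / q) := by
    rw [← Real.rpow_add hN, hpq.one_div_add_one_div, div_one, Real.rpow_one]
  nth_rewrite 1 [hsplit] at h
  exact le_of_mul_le_mul_right h (Real.rpow_pos_of_pos hN _)

theorem rpow_sum_le_of_interpolation (hμ : ∀ s, 0 ≤ μ s) {M K : ℝ} (hM0 : 0 ≤ M)
    (hK0 : 0 ≤ K) (hM : ∀ f : V → ℂ, (∀ t, ‖f t‖ ≤ 1) → ∀ s, ‖T f s‖ ≤ M)
    (hK : ∀ f : V → ℂ, √(∑ s, μ s * ‖T f s‖ ^ 2) ≤ K * √(∑ s, μ s * ‖f s‖ ^ 2))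
    (hp : 2 ≤ p) (f : V → ℂ) :
    (∑ s, μ s * ‖T f s‖ ^ p) ^ (1 / p) ≤
      M ^ (1 - 2 / p) * K ^ (2 / p) * (∑ s, μ s * ‖f s‖ ^ p) ^ (1 / p) := by
  have hpq : p.HolderConjugate p.conjExponent := .conjExponent (by linarith)
  set h := T f
  set g : V → ℂ := fun s => ((‖h s‖ ^ (p - 2) : ℝ) : ℂ) * (starRingEnd ℂ) (h s)
  have hgh : ∀ s, g s * h s = ((‖h s‖ ^ p : ℝ) : ℂ) := fun s => by
    calc g s * h s = ((‖h s‖ ^ (p - 2) * ‖h s‖ ^ (2 : ℝ) : ℝ) : ℂ) := by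
          simp [g, mul_assoc, conj_mul']
      _ = _ := by rw [← Real.rpow_add' (norm_nonneg _) (by linarith), sub_add_cancel]
  have hgq : ∀ s, ‖g s‖ ^ p.conjExponent = ‖h s‖ ^ p := fun s => by
    calc ‖g s‖ ^ p.conjExponent = (‖h s‖ ^ (p - 2) * ‖h s‖ ^ (1 : ℝ)) ^ p.conjExponent := by
          simp [g, Real.norm_of_nonneg (Real.rpow_nonneg (norm_nonneg _) _)]
      _ = _ := by
          rw [← Real.rpow_add' (norm_nonneg _) (by linarith), ← Real.rpow_mul (norm_nonneg _),
            show p - 2 + 1 = p - 1 by ring, hpq.sub_one_mul_conj]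
  have hN : ∑ s, (μ s : ℂ) * (g s * h s) = ((∑ s, μ s * ‖h s‖ ^ p : ℝ) : ℂ) := by
    simp only [hgh]
    push_cast
    rfl
  have key := norm_sum_mul_le_of_interpolation T hμ hM0 hK0 hM hK hp hpq f g
  have hN0 := sum_mul_norm_rpow_nonneg hμ h p
  rw [hN, norm_real, Real.norm_of_nonneg hN0] at key
  simp only [hgq] at key
  rw [← mul_assoc, mul_right_comm] at key
  exact rpow_inv_le_of_le_mul_rpow hN0
    (mul_nonneg (by positivity) (Real.rpow_nonneg (sum_mul_norm_rpow_nonneg hμ f p) _)) hpq key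

end Interpolation

section WeightedVariance

variable [Fintype V] {E : Type*} [NormedAddCommGroup E] [InnerProductSpace ℝ E]

lemma sum_mul_norm_sub_sq_le {μ : V → ℝ} (hμ1 : ∑ s, μ s = 1) (f : V → E) :
    ∑ s, μ s * ‖f s - ∑ t, μ t • f t‖ ^ 2 ≤ ∑ s, μ s * ‖f s‖ ^ 2 := by
  set c := ∑ t, μ t • f t
  have hc : ∑ s, μ s * (2 * inner ℝ (f s) c) = 2 * ‖c‖ ^ 2 := by
    calc ∑ s, μ s * (2 * inner ℝ (f s) c) = 2 * ∑ s, inner ℝ (μ s • f s) c := by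
          rw [mul_sum]
          exact sum_congr rfl fun s _ => by rw [real_inner_smul_left]; ring
      _ = 2 * ‖c‖ ^ 2 := by rw [← sum_inner, real_inner_self_eq_norm_sq]
  simp_rw [norm_sub_sq_real, mul_add, mul_sub, sum_add_distrib, sum_sub_distrib, hc, ← sum_mul, hμ1]
  nlinarith [sq_nonneg ‖c‖]

end WeightedVariance

lemma csInf_mem_setOf_le_mul {α : Type*} {P : α → Prop} {a b : α → ℝ} {K₀ : ℝ}
    (h : K₀ ∈ {K : ℝ | 0 ≤ K ∧ ∀ x, P x → a x ≤ K * b x}) :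
    sInf {K : ℝ | 0 ≤ K ∧ ∀ x, P x → a x ≤ K * b x} ∈
      {K : ℝ | 0 ≤ K ∧ ∀ x, P x → a x ≤ K * b x} := by
  have hclosed : IsClosed {K : ℝ | 0 ≤ K ∧ ∀ x, P x → a x ≤ K * b x} := by
    simp only [Set.ofPred_and, Set.ofPred_forall]
    exact isClosed_Ici.inter (isClosed_iInter fun x => isClosed_iInter fun _ =>
      isClosed_le continuous_const (continuous_id.mul continuous_const))
  exact hclosed.csInf_mem ⟨K₀, h⟩ ⟨0, fun _ hK => hK.1⟩

section Graph

variable [Fintype V] {ω : V → V → ℝ}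

lemma nu_nonneg (hnn : NonnegW ω) (s : V) : 0 ≤ nu ω s :=
  div_nonneg (sum_nonneg fun t _ => hnn s t) (sum_nonneg fun u _ => sum_nonneg fun t _ => hnn u t)

lemma sum_nu [Nonempty V] (hdeg : ∀ s, 0 < wdeg ω s) : ∑ s, nu ω s = 1 := by
  simp only [nu]
  rw [← sum_div, div_self (sum_pos (fun s _ => hdeg s) univ_nonempty).ne']

lemma sum_div_wdeg (hdeg : ∀ s, 0 < wdeg ω s) (s : V) : ∑ t, ω s t / wdeg ω s = 1 := by
  rw [← sum_div]
  exact div_self (hdeg s).ne'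

lemma sum_nu_mul_div_wdeg (hsym : SymmW ω) (hdeg : ∀ s, 0 < wdeg ω s) (t : V) :
    ∑ s, nu ω s * (ω s t / wdeg ω s) = nu ω t := by
  have h : ∀ s, nu ω s * (ω s t / wdeg ω s) = ω t s / ∑ u, wdeg ω u := fun s => by
    rw [nu, hsym s t, div_mul_div_comm, mul_comm (wdeg ω s), mul_div_mul_right _ _ (hdeg s).ne']
  simp_rw [h, ← sum_div]
  rfl

lemma lpNormW_two {X : Type*} [NormedAddCommGroup X] (ω : V → V → ℝ) (f : V → X) :
    lpNormW ω 2 f = √(∑ s, nu ω s * ‖f s‖ ^ 2) := by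
  simp only [lpNormW, Real.sqrt_eq_rpow, Real.rpow_two]

section Markov

variable {X : Type*} [NormedAddCommGroup X] [NormedSpace ℝ X]

lemma norm_markovW_le (hnn : NonnegW ω) (f : V → X) (s : V) :
    ‖markovW ω f s‖ ≤ ∑ t, ω s t / wdeg ω s * ‖f t‖ := by
  have hd : 0 ≤ wdeg ω s := sum_nonneg fun t _ => hnn s t
  calc ‖markovW ω f s‖ = (wdeg ω s)⁻¹ * ‖∑ t, ω s t • f t‖ := by
        rw [markovW, norm_smul, Real.norm_of_nonneg (inv_nonneg.2 hd)]
    _ ≤ (wdeg ω s)⁻¹ * ∑ t, ω s t * ‖f t‖ := by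
        refine mul_le_mul_of_nonneg_left (norm_sum_le_of_le _ fun t _ => ?_) (inv_nonneg.2 hd)
        rw [norm_smul, Real.norm_of_nonneg (hnn s t)]
    _ = ∑ t, ω s t / wdeg ω s * ‖f t‖ := by
        rw [mul_sum]
        exact sum_congr rfl fun t _ => by ring

lemma sum_nu_mul_norm_markovW_sq_le (hsym : SymmW ω) (hnn : NonnegW ω)
    (hdeg : ∀ s, 0 < wdeg ω s) (f : V → X) :
    ∑ s, nu ω s * ‖markovW ω f s‖ ^ 2 ≤ ∑ s, nu ω s * ‖f s‖ ^ 2 := by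
  have hjensen : ∀ s, ‖markovW ω f s‖ ^ 2 ≤ ∑ t, ω s t / wdeg ω s * ‖f t‖ ^ 2 := fun s => by
    refine (pow_le_pow_left₀ (norm_nonneg _) (norm_markovW_le hnn f s) 2).trans ?_
    exact (convexOn_pow 2).map_sum_le (fun t _ => div_nonneg (hnn s t) (hdeg s).le)
      (sum_div_wdeg hdeg s) (fun t _ => norm_nonneg (f t))
  calc ∑ s, nu ω s * ‖markovW ω f s‖ ^ 2
      ≤ ∑ s, nu ω s * ∑ t, ω s t / wdeg ω s * ‖f t‖ ^ 2 :=
        sum_le_sum fun s _ => mul_le_mul_of_nonneg_left (hjensen s) (nu_nonneg hnn s)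
    _ = ∑ t, (∑ s, nu ω s * (ω s t / wdeg ω s)) * ‖f t‖ ^ 2 := by
        simp_rw [mul_sum, sum_mul, mul_assoc]
        exact sum_comm
    _ = ∑ t, nu ω t * ‖f t‖ ^ 2 := by simp_rw [sum_nu_mul_div_wdeg hsym hdeg]

lemma markovW_sub_const (hdeg : ∀ s, 0 < wdeg ω s) (f : V → X) (c : X) :
    markovW ω (fun t => f t - c) = fun s => markovW ω f s - c := by
  ext s
  have hd : (wdeg ω s)⁻¹ * ∑ t, ω s t = 1 := inv_mul_cancel₀ (hdeg s).ne'
  simp only [markovW, smul_sub, sum_sub_distrib, ← sum_smul, smul_smul, hd, one_smul]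

end Markov

lemma opNorm0_two_mem (hsym : SymmW ω) (hnn : NonnegW ω) (hdeg : ∀ s, 0 < wdeg ω s) :
    0 ≤ opNorm0 ω 2 ∧ ∀ f : V → ℂ, ∑ s, (nu ω s : ℂ) * f s = 0 →
      lpNormW ω 2 (markovW ω f) ≤ opNorm0 ω 2 * lpNormW ω 2 f :=
  csInf_mem_setOf_le_mul ⟨zero_le_one, fun f _ => by
    rw [one_mul, lpNormW_two, lpNormW_two]
    exact Real.sqrt_le_sqrt (sum_nu_mul_norm_markovW_sq_le hsym hnn hdeg f)⟩

variable (ω) in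
def centeredMarkov : (V → ℂ) →ₗ[ℂ] V → ℂ where
  toFun f s := markovW ω f s - ∑ t, nu ω t • f t
  map_add' f g := by
    ext s
    simp only [markovW, Pi.add_apply, smul_add, sum_add_distrib]
    ring
  map_smul' c f := by
    ext s
    simp only [markovW, Pi.smul_apply, smul_eq_mul, RingHom.id_apply, Complex.real_smul, mul_sub,
      mul_sum]
    congr 1 <;> exact sum_congr rfl fun t _ => by ring

lemma centeredMarkov_apply_of_mean_eq_zero {f : V → ℂ} (hf : ∑ s, (nu ω s : ℂ) * f s = 0) :
    centeredMarkov ω f = markovW ω f := by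
  ext s
  simp [centeredMarkov, Complex.real_smul, hf]

lemma norm_centeredMarkov_le_two (hnn : NonnegW ω) (hdeg : ∀ s, 0 < wdeg ω s) (f : V → ℂ)
    (hf : ∀ t, ‖f t‖ ≤ 1) (s : V) : ‖centeredMarkov ω f s‖ ≤ 2 := by
  have : Nonempty V := ⟨s⟩
  have hA : ‖markovW ω f s‖ ≤ 1 := (norm_markovW_le hnn f s).trans <|
    (sum_le_sum fun t _ =>
      mul_le_of_le_one_right (div_nonneg (hnn s t) (hdeg s).le) (hf t)).trans_eq
        (sum_div_wdeg hdeg s)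
  have hP : ‖∑ t, nu ω t • f t‖ ≤ 1 := (norm_sum_le _ _).trans <|
    (sum_le_sum fun t _ => by
      rw [norm_smul, Real.norm_of_nonneg (nu_nonneg hnn t)]
      exact mul_le_of_le_one_right (nu_nonneg hnn t) (hf t)).trans_eq (sum_nu hdeg)
  calc ‖centeredMarkov ω f s‖ ≤ ‖markovW ω f s‖ + ‖∑ t, nu ω t • f t‖ := norm_sub_le _ _
    _ ≤ 2 := by linarith

lemma sqrt_sum_nu_mul_norm_centeredMarkov_sq_le (hsym : SymmW ω) (hnn : NonnegW ω)
    (hdeg : ∀ s, 0 < wdeg ω s) (f : V → ℂ) :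
    √(∑ s, nu ω s * ‖centeredMarkov ω f s‖ ^ 2) ≤
      opNorm0 ω 2 * √(∑ s, nu ω s * ‖f s‖ ^ 2) := by
  rcases isEmpty_or_nonempty V with hV | hV
  · simp
  obtain ⟨hK0, hK⟩ := opNorm0_two_mem hsym hnn hdeg
  set c := ∑ t, nu ω t • f t
  have hT : centeredMarkov ω f = markovW ω (fun t => f t - c) := (markovW_sub_const hdeg f c).symm
  have hmean : ∑ s, (nu ω s : ℂ) * (f s - c) = 0 := by
    simp only [c, Complex.real_smul, mul_sub, sum_sub_distrib, ← sum_mul, ← Complex.ofReal_sum,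
      sum_nu hdeg, Complex.ofReal_one, one_mul, sub_self]
  rw [hT, ← lpNormW_two, ← lpNormW_two]
  refine (hK _ hmean).trans (mul_le_mul_of_nonneg_left ?_ hK0)
  rw [lpNormW_two, lpNormW_two]
  exact Real.sqrt_le_sqrt (sum_mul_norm_sub_sq_le (sum_nu hdeg) f)

end Graph

/-- `‖A_𝒢‖_{B(L^p_0(V,ν;ℂ))} ≤ 2^{1−2/p} ‖A_𝒢‖_{B(L²_0(V,ν;ℂ))}^{2/p}`
for `p ∈ [2,∞)`. -/
theorem stmt10 (p : ℝ) (hp : 2 ≤ p)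
    {V : Type*} [Fintype V]
    (ω : V → V → ℝ) (hsym : SymmW ω) (hnn : NonnegW ω)
    (hdeg : ∀ s, 0 < wdeg ω s) :
    opNorm0 ω p ≤ (2 : ℝ) ^ (1 - 2 / p) * opNorm0 ω 2 ^ (2 / p) := by
  obtain ⟨hK0, -⟩ := opNorm0_two_mem hsym hnn hdeg
  refine csInf_le ⟨0, fun _ hK => hK.1⟩ ⟨by positivity, fun f hf => ?_⟩
  rw [← centeredMarkov_apply_of_mean_eq_zero hf]
  exact rpow_sum_le_of_interpolation (centeredMarkov ω) (nu_nonneg hnn) zero_le_two hK0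
    (norm_centeredMarkov_le_two hnn hdeg) (sqrt_sum_nu_mul_norm_centeredMarkov_sq_le hsym hnn hdeg)
    hp f
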